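/- Let γ > 1, let p(v) = v^{-γ}, let μ̃ > 0, let 0 < v_m < v₊, and set σ* := √( (p(v_m) − p(v₊)) / (v₊ − v_m) ). Then there exists a strictly increasing C¹ function V : ℝ → ℝ with v_m < V(ξ) < v₊ for all ξ, satisfying the ODE μ̃ σ* V'(ξ) = − σ*² (V(ξ) − v_m) − ( p(V(ξ)) − p(v_m) ) for every ξ ∈ ℝ, together with lim_{ξ→−∞} V(ξ) = v_m and lim_{ξ→+∞} V(ξ) = v₊. Moreover V is unique up to translation: if Ṽ is any other function with these properties, then there exists c ∈ ℝ such that Ṽ(ξ) = V(ξ + c) for all ξ. -/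

import Mathlib

/-- `V` is a 2-viscous-shock profile for the barotropic Navier–Stokes equations
with pressure `p(v) = v^(-γ)`, effective viscosity `μ̃`, end states `v_m`, `v₊`
and mass flux `σ* = √((p(v_m) - p(v₊))/(v₊ - v_m))`: a strictly increasing `C¹`
solution of `μ̃ σ* V' = -σ*²(V - v_m) - (p(V) - p(v_m))` lying in `(v_m, v₊)`
with limits `v_m` at `-∞` and `v₊` at `+∞`. -/
def IsShockProfile (γ mu vm vp : ℝ) (V : ℝ → ℝ) : Prop :=
  StrictMono V ∧ ContDiff ℝ 1 V ∧ (∀ ξ : ℝ, vm < V ξ ∧ V ξ < vp) ∧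
    (∀ ξ : ℝ,
      mu * Real.sqrt ((vm ^ (-γ) - vp ^ (-γ)) / (vp - vm)) * deriv V ξ
        = -(Real.sqrt ((vm ^ (-γ) - vp ^ (-γ)) / (vp - vm))) ^ 2 * (V ξ - vm)
          - ((V ξ) ^ (-γ) - vm ^ (-γ))) ∧
    Filter.Tendsto V Filter.atBot (nhds vm) ∧ Filter.Tendsto V Filter.atTop (nhds vp)

namespace NSShockAux

open Real Set Filter MeasureTheory Topology intervalIntegral

/-- The shock speed. -/
noncomputable def sig (γ vm vp : ℝ) : ℝ := Real.sqrt ((vm ^ (-γ) - vp ^ (-γ)) / (vp - vm))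

/-- The right-hand side of the profile ODE. -/
noncomputable def FF (γ vm vp : ℝ) (v : ℝ) : ℝ :=
  -(sig γ vm vp) ^ 2 * (v - vm) - (v ^ (-γ) - vm ^ (-γ))

section

variable {γ vm vp : ℝ}

lemma rpow_neg_anti {a b e : ℝ} (ha : 0 < a) (hab : a ≤ b) (he : 0 < e) :
    b ^ (-e) ≤ a ^ (-e) := by
  rw [Real.rpow_neg ha.le, Real.rpow_neg (ha.trans_le hab).le]
  exact inv_anti₀ (Real.rpow_pos_of_pos ha e) (Real.rpow_le_rpow ha.le hab he.le)

lemma rpow_neg_anti_strict {a b e : ℝ} (ha : 0 < a) (hab : a < b) (he : 0 < e) :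
    b ^ (-e) < a ^ (-e) := by
  rw [Real.rpow_neg ha.le, Real.rpow_neg (ha.trans hab).le]
  exact inv_strictAnti₀ (Real.rpow_pos_of_pos ha e) (Real.rpow_lt_rpow ha.le hab he)

lemma num_pos (hγ : 1 < γ) (hvm : 0 < vm) (hmp : vm < vp) :
    0 < vm ^ (-γ) - vp ^ (-γ) :=
  sub_pos.2 (rpow_neg_anti_strict hvm hmp (by linarith))

lemma sig_sq (hγ : 1 < γ) (hvm : 0 < vm) (hmp : vm < vp) :
    sig γ vm vp ^ 2 = (vm ^ (-γ) - vp ^ (-γ)) / (vp - vm) :=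
  Real.sq_sqrt (le_of_lt (div_pos (num_pos hγ hvm hmp) (sub_pos.2 hmp)))

lemma sig_pos (hγ : 1 < γ) (hvm : 0 < vm) (hmp : vm < vp) : 0 < sig γ vm vp :=
  Real.sqrt_pos.2 (div_pos (num_pos hγ hvm hmp) (sub_pos.2 hmp))

lemma FF_vm : FF γ vm vp vm = 0 := by simp [FF]

lemma FF_vp (hγ : 1 < γ) (hvm : 0 < vm) (hmp : vm < vp) : FF γ vm vp vp = 0 := by
  rw [FF, sig_sq hγ hvm hmp, neg_mul, div_mul_cancel₀ _ (sub_ne_zero.2 (ne_of_gt hmp))]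
  ring

/-- Strict convexity of the pressure `v ↦ v^(-γ)` on `(0, ∞)`. -/
lemma pressure_strictConvexOn (hγ : 1 < γ) :
    StrictConvexOn ℝ (Ioi (0:ℝ)) (fun x : ℝ => x ^ (-γ)) := by
  have hγ0 : (0:ℝ) < γ := by linarith
  have hd : ∀ x ∈ Ioi (0:ℝ), HasDerivAt (fun y : ℝ => y ^ (-γ)) (-γ * x ^ (-γ - 1)) x :=
    fun x hx => Real.hasDerivAt_rpow_const (Or.inl (ne_of_gt hx))
  apply strictConvexOn_of_deriv2_pos (convex_Ioi 0)
    (fun x hx => ((hd x hx).continuousAt).continuousWithinAt)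
  intro x hx
  rw [interior_Ioi] at hx
  have h1 : deriv (fun y : ℝ => y ^ (-γ)) =ᶠ[𝓝 x] fun y : ℝ => -γ * y ^ (-γ - 1) := by
    filter_upwards [isOpen_Ioi.mem_nhds hx] with y hy using (hd y hy).deriv
  have h2 : deriv^[2] (fun y : ℝ => y ^ (-γ)) x
      = deriv (fun y : ℝ => -γ * y ^ (-γ - 1)) x := by
    simp only [Function.iterate_succ, Function.iterate_zero, Function.comp_apply, id]
    exact Filter.EventuallyEq.deriv_eq h1
  rw [h2]
  have h3 : HasDerivAt (fun y : ℝ => -γ * y ^ (-γ - 1)) (-γ * ((-γ - 1) * x ^ (-γ - 1 - 1))) x :=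
    (Real.hasDerivAt_rpow_const (Or.inl (ne_of_gt hx))).const_mul (-γ)
  rw [h3.deriv]
  have hx2 : (0:ℝ) < x ^ (-γ - 1 - 1) := Real.rpow_pos_of_pos hx _
  nlinarith [mul_pos (mul_pos hγ0 (show (0:ℝ) < γ + 1 by linarith)) hx2]

lemma FF_pos (hγ : 1 < γ) (hvm : 0 < vm) (hmp : vm < vp) :
    ∀ v ∈ Ioo vm vp, 0 < FF γ vm vp v := by
  intro v hv
  have hv0 : (0:ℝ) < v := hvm.trans hv.1
  have hsec := (pressure_strictConvexOn hγ).secant_strict_mono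
    (mem_Ioi.2 hvm) (mem_Ioi.2 hv0) (mem_Ioi.2 (hvm.trans hmp))
    (ne_of_gt hv.1) (ne_of_gt hmp) hv.2
  have h1 : (0:ℝ) < v - vm := sub_pos.2 hv.1
  have h2 : (0:ℝ) < vp - vm := sub_pos.2 hmp
  rw [div_lt_div_iff₀ h1 h2] at hsec
  have hq : -(sig γ vm vp) ^ 2 = (vp ^ (-γ) - vm ^ (-γ)) / (vp - vm) := by
    rw [sig_sq hγ hvm hmp]; ring
  have : FF γ vm vp v
      = ((vp ^ (-γ) - vm ^ (-γ)) * (v - vm) - (v ^ (-γ) - vm ^ (-γ)) * (vp - vm)) / (vp - vm) := by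
    rw [FF, hq]; field_simp
  rw [this]
  exact div_pos (by linarith) h2

lemma FF_hasDerivAt (hγ : 1 < γ) {v : ℝ} (hv : 0 < v) :
    HasDerivAt (FF γ vm vp) (-(sig γ vm vp) ^ 2 - -γ * v ^ (-γ - 1)) v := by
  have h1 : HasDerivAt (fun y : ℝ => y ^ (-γ)) (-γ * v ^ (-γ - 1)) v :=
    Real.hasDerivAt_rpow_const (Or.inl (ne_of_gt hv))
  have h2 : HasDerivAt (fun y : ℝ => -(sig γ vm vp) ^ 2 * (y - vm))
      (-(sig γ vm vp) ^ 2 * 1) v := ((hasDerivAt_id v).sub_const vm).const_mul _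
  have h3 : HasDerivAt (fun y : ℝ => -(sig γ vm vp) ^ 2 * (y - vm) - (y ^ (-γ) - vm ^ (-γ)))
      (-(sig γ vm vp) ^ 2 * 1 - -γ * v ^ (-γ - 1)) v := h2.sub (h1.sub_const _)
  rw [mul_one] at h3
  exact h3

lemma FF_bound (hγ : 1 < γ) (hvm : 0 < vm) (hmp : vm < vp) :
    ∃ K : ℝ, 0 < K ∧ (∀ v ∈ Icc vm vp, FF γ vm vp v ≤ K * (vp - v)) ∧
      (∀ v ∈ Icc vm vp, FF γ vm vp v ≤ K * (v - vm)) := by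
  have hγ0 : (0:ℝ) < γ := by linarith
  set K : ℝ := (sig γ vm vp) ^ 2 + γ * vm ^ (-γ - 1) with hKdef
  have hK : 0 < K := by
    have := Real.rpow_pos_of_pos hvm (-γ - 1)
    have := sq_nonneg (sig γ vm vp)
    nlinarith
  have hbound : ∀ x ∈ Icc vm vp, ‖-(sig γ vm vp) ^ 2 - -γ * x ^ (-γ - 1)‖ ≤ K := by
    intro x hx
    have hx0 : 0 < x := lt_of_lt_of_le hvm hx.1
    have h1 : 0 < x ^ (-γ - 1) := Real.rpow_pos_of_pos hx0 _
    have h2 : x ^ (-γ - 1) ≤ vm ^ (-γ - 1) := by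
      rw [show -γ - 1 = -(γ + 1) by ring]
      exact rpow_neg_anti hvm hx.1 (by linarith)
    have h3 := sq_nonneg (sig γ vm vp)
    rw [Real.norm_eq_abs, abs_le]
    constructor <;> nlinarith [mul_le_mul_of_nonneg_left h2 hγ0.le]
  have hlip : ∀ x ∈ Icc vm vp, ∀ y ∈ Icc vm vp,
      ‖FF γ vm vp y - FF γ vm vp x‖ ≤ K * ‖y - x‖ := fun x hx y hy =>
    (convex_Icc vm vp).norm_image_sub_le_of_norm_hasDerivWithin_le
      (fun x hx => (FF_hasDerivAt hγ (lt_of_lt_of_le hvm hx.1)).hasDerivWithinAt) hbound hx hy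
  refine ⟨K, hK, fun v hv => ?_, fun v hv => ?_⟩
  · have h := hlip v hv vp (right_mem_Icc.2 hmp.le)
    rw [FF_vp hγ hvm hmp, zero_sub, norm_neg, Real.norm_eq_abs, Real.norm_eq_abs,
      abs_of_nonneg (by linarith [hv.2] : (0:ℝ) ≤ vp - v)] at h
    exact (le_abs_self _).trans h
  · have h := hlip vm (left_mem_Icc.2 hmp.le) v hv
    rw [FF_vm, sub_zero, Real.norm_eq_abs, Real.norm_eq_abs,
      abs_of_nonneg (by linarith [hv.1] : (0:ℝ) ≤ v - vm)] at h
    exact (le_abs_self _).trans h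

end

end NSShockAux

open NSShockAux Real Set Filter MeasureTheory Topology intervalIntegral in
/-- Existence of the viscous shock profile, and its uniqueness up to translation. -/
theorem stmt_15 (γ mu vm vp : ℝ) (hγ : 1 < γ) (hmu : 0 < mu)
    (hvm : 0 < vm) (hmp : vm < vp) :
    ∃ V : ℝ → ℝ, IsShockProfile γ mu vm vp V ∧
      ∀ W : ℝ → ℝ, IsShockProfile γ mu vm vp W →
        ∃ c : ℝ, ∀ ξ : ℝ, W ξ = V (ξ + c) := by
  classical
  have hγ0 : (0:ℝ) < γ := by linarith
  have hσ : 0 < sig γ vm vp := sig_pos hγ hvm hmp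
  have hμσ : 0 < mu * sig γ vm vp := mul_pos hmu hσ
  have hFpos : ∀ v ∈ Ioo vm vp, 0 < FF γ vm vp v := FF_pos hγ hvm hmp
  have hFcont : ∀ v ∈ Ioi (0:ℝ), ContinuousAt (FF γ vm vp) v := fun v hv =>
    (FF_hasDerivAt hγ hv).continuousAt
  obtain ⟨K, hK, hKp, hKm⟩ := FF_bound hγ hvm hmp
  set g : ℝ → ℝ := fun v => mu * sig γ vm vp / FF γ vm vp v with hgdef
  have hIooIoi : Ioo vm vp ⊆ Ioi (0:ℝ) := fun x hx => lt_trans hvm hx.1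
  have hgpos : ∀ v ∈ Ioo vm vp, 0 < g v := fun v hv => div_pos hμσ (hFpos v hv)
  have hgcont : ContinuousOn g (Ioo vm vp) :=
    continuousOn_const.div (fun v hv => (hFcont v (hIooIoi hv)).continuousWithinAt)
      (fun v hv => ne_of_gt (hFpos v hv))
  set v0 : ℝ := (vm + vp) / 2 with hv0def
  have hv0 : v0 ∈ Ioo vm vp := ⟨by rw [hv0def]; linarith, by rw [hv0def]; linarith⟩
  have hint : ∀ u ∈ Ioo vm vp, ∀ v ∈ Ioo vm vp, IntervalIntegrable g volume u v :=
    fun u hu v hv => (hgcont.mono (Set.ordConnected_Ioo.uIcc_subset hu hv)).intervalIntegrable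
  set G : ℝ → ℝ := fun v => ∫ t in v0..v, g t with hGdef
  have hGd : ∀ v ∈ Ioo vm vp, HasDerivAt G (g v) v := fun v hv =>
    intervalIntegral.integral_hasDerivAt_right (hint v0 hv0 v hv)
      (hgcont.stronglyMeasurableAtFilter isOpen_Ioo v hv)
      (hgcont.continuousAt (isOpen_Ioo.mem_nhds hv))
  have hGcont : ContinuousOn G (Ioo vm vp) := fun v hv =>
    ((hGd v hv).continuousAt).continuousWithinAt
  have hGmono : StrictMonoOn G (Ioo vm vp) := by
    apply strictMonoOn_of_deriv_pos (convex_Ioo vm vp) hGcont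
    intro x hx
    rw [interior_Ioo] at hx
    rw [(hGd x hx).deriv]
    exact hgpos x hx
  set c : ℝ := mu * sig γ vm vp / K with hcdef
  have hc : 0 < c := div_pos hμσ hK
  -- comparison near `vp`
  have keyp : ∀ v ∈ Ioo vm vp, v0 ≤ v →
      c * Real.log (vp - v0) - c * Real.log (vp - v) ≤ G v := by
    intro v hv hv0v
    have hsub : Icc v0 v ⊆ Ioo vm vp := fun t ht =>
      ⟨lt_of_lt_of_le hv0.1 ht.1, lt_of_le_of_lt ht.2 hv.2⟩
    have hlow : ∀ t ∈ Icc v0 v, c / (vp - t) ≤ g t := by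
      intro t ht
      have htm : t ∈ Ioo vm vp := hsub ht
      have h1 : 0 < vp - t := sub_pos.2 htm.2
      have h2 : FF γ vm vp t ≤ K * (vp - t) := hKp t (Ioo_subset_Icc_self htm)
      have h3 : mu * sig γ vm vp / (K * (vp - t)) ≤ g t :=
        div_le_div_of_nonneg_left hμσ.le (hFpos t htm) h2
      calc c / (vp - t) = mu * sig γ vm vp / (K * (vp - t)) := by
            rw [hcdef, div_div]
        _ ≤ g t := h3
    have hcontlow : ContinuousOn (fun t => c / (vp - t)) (Icc v0 v) :=
      continuousOn_const.div ((continuous_const.sub continuous_id).continuousOn)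
        (fun t ht => ne_of_gt (sub_pos.2 (lt_of_le_of_lt ht.2 hv.2)))
    have hintlow : IntervalIntegrable (fun t => c / (vp - t)) volume v0 v := by
      rw [intervalIntegrable_iff_integrableOn_Icc_of_le hv0v]
      exact hcontlow.integrableOn_compact isCompact_Icc
    have hanti : ∀ t ∈ uIcc v0 v, HasDerivAt (fun t => -c * Real.log (vp - t))
        (c / (vp - t)) t := by
      intro t ht
      rw [uIcc_of_le hv0v] at ht
      have h1 : vp - t ≠ 0 := ne_of_gt (sub_pos.2 (lt_of_le_of_lt ht.2 hv.2))
      have h2 : HasDerivAt (fun t : ℝ => vp - t) (-1) t := by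
        simpa using (hasDerivAt_id t).const_sub vp
      have h3 := (h2.log h1).const_mul (-c)
      exact h3.congr_deriv (by ring)
    have heq : ∫ t in v0..v, c / (vp - t)
        = -c * Real.log (vp - v) - -c * Real.log (vp - v0) :=
      intervalIntegral.integral_eq_sub_of_hasDerivAt hanti hintlow
    have hmono := intervalIntegral.integral_mono_on hv0v hintlow (hint v0 hv0 v hv) hlow
    rw [heq] at hmono
    have : G v = ∫ t in v0..v, g t := rfl
    linarith
  -- comparison near `vm`
  have keym : ∀ v ∈ Ioo vm vp, v ≤ v0 →
      G v ≤ c * Real.log (v - vm) - c * Real.log (v0 - vm) := by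
    intro v hv hvv0
    have hsub : Icc v v0 ⊆ Ioo vm vp := fun t ht =>
      ⟨lt_of_lt_of_le hv.1 ht.1, lt_of_le_of_lt ht.2 hv0.2⟩
    have hlow : ∀ t ∈ Icc v v0, c / (t - vm) ≤ g t := by
      intro t ht
      have htm : t ∈ Ioo vm vp := hsub ht
      have h1 : 0 < t - vm := sub_pos.2 htm.1
      have h2 : FF γ vm vp t ≤ K * (t - vm) := hKm t (Ioo_subset_Icc_self htm)
      have h3 : mu * sig γ vm vp / (K * (t - vm)) ≤ g t :=
        div_le_div_of_nonneg_left hμσ.le (hFpos t htm) h2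
      calc c / (t - vm) = mu * sig γ vm vp / (K * (t - vm)) := by
            rw [hcdef, div_div]
        _ ≤ g t := h3
    have hcontlow : ContinuousOn (fun t => c / (t - vm)) (Icc v v0) :=
      continuousOn_const.div ((continuous_id.sub continuous_const).continuousOn)
        (fun t ht => ne_of_gt (sub_pos.2 (lt_of_lt_of_le hv.1 ht.1)))
    have hintlow : IntervalIntegrable (fun t => c / (t - vm)) volume v v0 := by
      rw [intervalIntegrable_iff_integrableOn_Icc_of_le hvv0]
      exact hcontlow.integrableOn_compact isCompact_Icc
    have hanti : ∀ t ∈ uIcc v v0, HasDerivAt (fun t => c * Real.log (t - vm))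
        (c / (t - vm)) t := by
      intro t ht
      rw [uIcc_of_le hvv0] at ht
      have h1 : t - vm ≠ 0 := ne_of_gt (sub_pos.2 (lt_of_lt_of_le hv.1 ht.1))
      have h2 : HasDerivAt (fun t : ℝ => t - vm) 1 t := (hasDerivAt_id t).sub_const vm
      have h3 := (h2.log h1).const_mul c
      exact h3.congr_deriv (by ring)
    have heq : ∫ t in v..v0, c / (t - vm)
        = c * Real.log (v0 - vm) - c * Real.log (v - vm) :=
      intervalIntegral.integral_eq_sub_of_hasDerivAt hanti hintlow
    have hmono := intervalIntegral.integral_mono_on hvv0 hintlow (hint v hv v0 hv0) hlow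
    rw [heq] at hmono
    have hsym : G v = -∫ t in v..v0, g t := intervalIntegral.integral_symm v v0
    linarith
  -- divergence of `G` at the endpoints
  have hGtop : Tendsto G (𝓝[<] vp) atTop := by
    apply tendsto_atTop_mono' (𝓝[<] vp)
      (f₁ := fun v => c * Real.log (vp - v0) + -c * Real.log (vp - v))
    · filter_upwards [Ioo_mem_nhdsLT_of_mem (show vp ∈ Ioc v0 vp from ⟨hv0.2, le_rfl⟩)]
        with v hv
      have := keyp v ⟨lt_trans hv0.1 hv.1, hv.2⟩ hv.1.le
      linarith
    · have h1 : Tendsto (fun v => vp - v) (𝓝[<] vp) (𝓝[>] (0:ℝ)) := by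
        apply tendsto_nhdsWithin_of_tendsto_nhds_of_eventually_within
        · have h0 : Tendsto (fun v : ℝ => vp - v) (𝓝 vp) (𝓝 (vp - vp)) :=
            (continuous_const.sub continuous_id).tendsto vp
          rw [sub_self] at h0
          exact h0.mono_left nhdsWithin_le_nhds
        · filter_upwards [self_mem_nhdsWithin] with v hv
          exact sub_pos.2 (mem_Iio.1 hv)
      have h2 : Tendsto (fun v => Real.log (vp - v)) (𝓝[<] vp) atBot :=
        Real.tendsto_log_nhdsGT_zero.comp h1
      have h3 : Tendsto (fun v => -c * Real.log (vp - v)) (𝓝[<] vp) atTop :=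
        h2.const_mul_atBot_of_neg (by linarith)
      exact tendsto_atTop_add_const_left _ _ h3
  have hGbot : Tendsto G (𝓝[>] vm) atBot := by
    apply tendsto_atBot_mono' (𝓝[>] vm)
      (f₁ := fun v => c * Real.log (v - vm) + -(c * Real.log (v0 - vm)))
    · filter_upwards [Ioo_mem_nhdsGT_of_mem (show vm ∈ Ico vm v0 from ⟨le_rfl, hv0.1⟩)]
        with v hv
      have := keym v ⟨hv.1, lt_trans hv.2 hv0.2⟩ hv.2.le
      linarith
    · have h1 : Tendsto (fun v => v - vm) (𝓝[>] vm) (𝓝[>] (0:ℝ)) := by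
        apply tendsto_nhdsWithin_of_tendsto_nhds_of_eventually_within
        · have h0 : Tendsto (fun v : ℝ => v - vm) (𝓝 vm) (𝓝 (vm - vm)) :=
            (continuous_id.sub continuous_const).tendsto vm
          rw [sub_self] at h0
          exact h0.mono_left nhdsWithin_le_nhds
        · filter_upwards [self_mem_nhdsWithin] with v hv
          exact sub_pos.2 (mem_Ioi.1 hv)
      have h2 : Tendsto (fun v => Real.log (v - vm)) (𝓝[>] vm) atBot :=
        Real.tendsto_log_nhdsGT_zero.comp h1
      have h3 : Tendsto (fun v => c * Real.log (v - vm)) (𝓝[>] vm) atBot :=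
        h2.const_mul_atBot hc
      exact tendsto_atBot_add_const_right _ _ h3
  -- surjectivity of G onto ℝ
  have hsurj : ∀ y : ℝ, ∃ v, v ∈ Ioo vm vp ∧ G v = y := by
    intro y
    have h2 : ∀ᶠ v in 𝓝[<] vp, y < G v := hGtop.eventually_gt_atTop y
    have h2' : ∀ᶠ v in 𝓝[<] vp, v ∈ Ioo vm vp :=
      eventually_of_mem (Ioo_mem_nhdsLT_of_mem ⟨hmp, le_rfl⟩) (fun v hv => hv)
    obtain ⟨v2, hv2m, hv2⟩ := (h2'.and h2).exists
    have h1 : ∀ᶠ v in 𝓝[>] vm, G v < y := hGbot.eventually_lt_atBot y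
    have h1' : ∀ᶠ v in 𝓝[>] vm, v ∈ Ioo vm vp :=
      eventually_of_mem (Ioo_mem_nhdsGT_of_mem ⟨le_rfl, hmp⟩) (fun v hv => hv)
    obtain ⟨v1, hv1m, hv1⟩ := (h1'.and h1).exists
    have h12 : v1 < v2 := by
      by_contra hcon
      push_neg at hcon
      have := hGmono.monotoneOn hv2m hv1m hcon
      linarith
    have hIcc : Icc v1 v2 ⊆ Ioo vm vp := fun t ht =>
      ⟨lt_of_lt_of_le hv1m.1 ht.1, lt_of_le_of_lt ht.2 hv2m.2⟩
    obtain ⟨v, hv, hGv⟩ := intermediate_value_Ioo h12.le (hGcont.mono hIcc) ⟨hv1, hv2⟩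
    exact ⟨v, hIcc (Ioo_subset_Icc_self hv), hGv⟩
  -- the profile is the inverse of G
  set V : ℝ → ℝ := fun ξ => Classical.choose (hsurj ξ) with hVdef
  have hVmem : ∀ ξ, V ξ ∈ Ioo vm vp := fun ξ => (Classical.choose_spec (hsurj ξ)).1
  have hGV : ∀ ξ, G (V ξ) = ξ := fun ξ => (Classical.choose_spec (hsurj ξ)).2
  have hVG : ∀ v ∈ Ioo vm vp, V (G v) = v := fun v hv =>
    hGmono.injOn (hVmem (G v)) hv (hGV (G v))
  have hVmono : StrictMono V := by
    intro ξ1 ξ2 h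
    by_contra hcon
    push_neg at hcon
    have h2 := hGmono.monotoneOn (hVmem ξ2) (hVmem ξ1) hcon
    rw [hGV, hGV] at h2
    linarith
  have hrange : range V = Ioo vm vp := by
    apply subset_antisymm
    · rintro _ ⟨ξ, rfl⟩
      exact hVmem ξ
    · intro v hv
      exact ⟨G v, hVG v hv⟩
  have hVcont : Continuous V := by
    rw [continuous_iff_continuousAt]
    intro ξ
    apply continuousAt_of_monotoneOn_of_image_mem_nhds
      (hVmono.monotone.monotoneOn univ) univ_mem
    rw [image_univ, hrange]
    exact isOpen_Ioo.mem_nhds (hVmem ξ)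
  have hVd : ∀ ξ, HasDerivAt V (FF γ vm vp (V ξ) / (mu * sig γ vm vp)) ξ := by
    intro ξ
    have h1 : HasDerivAt G (g (V ξ)) (V ξ) := hGd _ (hVmem ξ)
    have h2 : g (V ξ) ≠ 0 := ne_of_gt (hgpos _ (hVmem ξ))
    have h3 := h1.of_local_left_inverse hVcont.continuousAt h2
      (Filter.Eventually.of_forall hGV)
    have h4 : (g (V ξ))⁻¹ = FF γ vm vp (V ξ) / (mu * sig γ vm vp) := by
      rw [hgdef]
      exact inv_div _ _
    rwa [h4] at h3
  have hVderiv : ∀ ξ, deriv V ξ = FF γ vm vp (V ξ) / (mu * sig γ vm vp) :=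
    fun ξ => (hVd ξ).deriv
  have hFV : Continuous (fun ξ => FF γ vm vp (V ξ)) := by
    apply ContinuousOn.comp_continuous
      (fun v hv => (hFcont v hv).continuousWithinAt) hVcont
    exact fun ξ => hIooIoi (hVmem ξ)
  have hC1 : ContDiff ℝ 1 V := by
    rw [contDiff_one_iff_deriv]
    refine ⟨fun ξ => (hVd ξ).differentiableAt, ?_⟩
    have h5 : deriv V = fun ξ => FF γ vm vp (V ξ) / (mu * sig γ vm vp) := funext hVderiv
    rw [h5]
    exact hFV.div_const _
  have hODE : ∀ ξ, mu * sig γ vm vp * deriv V ξ = FF γ vm vp (V ξ) := by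
    intro ξ
    rw [hVderiv ξ]
    field_simp
  have hlimtop : Tendsto V atTop (𝓝 vp) := by
    rw [tendsto_order]
    constructor
    · intro a ha
      have hb : max a vm < vp := max_lt ha hmp
      set w := (max a vm + vp) / 2 with hwdef
      have hw1 : max a vm < w := by rw [hwdef]; linarith
      have hwmem : w ∈ Ioo vm vp :=
        ⟨lt_of_le_of_lt (le_max_right a vm) hw1, by rw [hwdef]; linarith⟩
      filter_upwards [eventually_ge_atTop (G w)] with ξ hξ
      have hwV : w ≤ V ξ := by
        by_contra hcon
        push_neg at hcon
        have := hGmono (hVmem ξ) hwmem hcon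
        rw [hGV] at this
        linarith
      exact lt_of_le_of_lt (le_max_left a vm) (lt_of_lt_of_le hw1 hwV)
    · intro a ha
      exact Eventually.of_forall fun ξ => lt_trans (hVmem ξ).2 ha
  have hlimbot : Tendsto V atBot (𝓝 vm) := by
    rw [tendsto_order]
    constructor
    · intro a ha
      exact Eventually.of_forall fun ξ => lt_trans ha (hVmem ξ).1
    · intro a ha
      have hb : vm < min a vp := lt_min ha hmp
      set w := (vm + min a vp) / 2 with hwdef
      have hw1 : w < min a vp := by rw [hwdef]; linarith
      have hwmem : w ∈ Ioo vm vp :=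
        ⟨by rw [hwdef]; linarith, lt_of_lt_of_le hw1 (min_le_right a vp)⟩
      filter_upwards [eventually_le_atBot (G w)] with ξ hξ
      have hwV : V ξ ≤ w := by
        by_contra hcon
        push_neg at hcon
        have := hGmono hwmem (hVmem ξ) hcon
        rw [hGV] at this
        linarith
      exact lt_of_le_of_lt hwV (lt_of_lt_of_le hw1 (min_le_left a vp))
  refine ⟨V, ⟨hVmono, hC1, fun ξ => hVmem ξ, fun ξ => ?_, hlimbot, hlimtop⟩, ?_⟩
  · have h6 := hODE ξ
    simpa only [FF, sig] using h6
  -- uniqueness up to translation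
  intro W hW
  obtain ⟨hWmono, hWC1, hWmem, hWODE, hWbot, hWtop⟩ := hW
  have hWmem' : ∀ ξ, W ξ ∈ Ioo vm vp := fun ξ => hWmem ξ
  have hWd : ∀ ξ, HasDerivAt W (FF γ vm vp (W ξ) / (mu * sig γ vm vp)) ξ := by
    intro ξ
    have h1 : DifferentiableAt ℝ W ξ := (hWC1.differentiable one_ne_zero).differentiableAt
    have h2 : mu * sig γ vm vp * deriv W ξ = FF γ vm vp (W ξ) := by
      simpa only [FF, sig] using hWODE ξ
    rw [mul_comm] at h2
    have h3 : deriv W ξ = FF γ vm vp (W ξ) / (mu * sig γ vm vp) :=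
      (eq_div_iff (ne_of_gt hμσ)).2 h2
    exact h3 ▸ h1.hasDerivAt
  have hh : ∀ ξ, HasDerivAt (fun ξ => G (W ξ) - ξ) 0 ξ := by
    intro ξ
    have h1 : HasDerivAt (fun ξ => G (W ξ))
        (g (W ξ) * (FF γ vm vp (W ξ) / (mu * sig γ vm vp))) ξ :=
      (hGd _ (hWmem' ξ)).comp ξ (hWd ξ)
    have h2 : g (W ξ) * (FF γ vm vp (W ξ) / (mu * sig γ vm vp)) = 1 := by
      have hF0 : FF γ vm vp (W ξ) ≠ 0 := ne_of_gt (hFpos _ (hWmem' ξ))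
      rw [hgdef]
      field_simp
    rw [h2] at h1
    have h8 := h1.sub (hasDerivAt_id' (x := ξ))
    rw [sub_self] at h8
    exact h8
  have hconst : ∀ ξ : ℝ, G (W ξ) - ξ = G (W 0) - 0 := fun ξ =>
    is_const_of_deriv_eq_zero (fun x => (hh x).differentiableAt)
      (fun x => (hh x).deriv) ξ 0
  refine ⟨G (W 0), fun ξ => ?_⟩
  have h7 : G (W ξ) = ξ + G (W 0) := by
    have := hconst ξ
    linarith
  apply hGmono.injOn (hWmem' ξ) (hVmem (ξ + G (W 0)))
  rw [hGV, h7]
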